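/- arXiv:math/9702217 — 2 statements merged into one kernel-verified Lean document; each statement's English description precedes it below -/
import Mathlib

section
/- There exists a universal constant c > 0 such that for every n ≥ 1, the identity map Iₙ : B(ℓ₂ⁿ) → HS(ℓ₂ⁿ) satisfies π₁(Iₙ) ≤ c·n. -/
open NormedSpace Metric

noncomputable section

/-- `T` is absolutely `p`-summing with constant `C`. -/
def PSummingWith {E F : Type*} [NormedAddCommGroup E] [NormedSpace ℂ E]
    [NormedAddCommGroup F] [NormedSpace ℂ F] (p : ℝ) (T : E →L[ℂ] F) (C : ℝ) : Prop :=
  ∀ (n : ℕ) (v : Fin n → E) (B : ℝ),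
    (∀ φ : E →L[ℂ] ℂ, ‖φ‖ ≤ 1 → (∑ i, ‖φ (v i)‖ ^ p) ^ (1/p) ≤ B) →
    (∑ i, ‖T (v i)‖ ^ p) ^ (1/p) ≤ C * B

/-- The identity map `Iₙ` from `B(ℓ₂ⁿ)` (n×n matrices with the operator norm) to `HS(ℓ₂ⁿ)`
(the same matrices with the Hilbert–Schmidt norm), realized by sending an operator on
`EuclideanSpace ℂ (Fin n)` to its matrix of entries in `EuclideanSpace ℂ (Fin n × Fin n)`. -/
def opToHS (n : ℕ) :
    (EuclideanSpace ℂ (Fin n) →L[ℂ] EuclideanSpace ℂ (Fin n)) →L[ℂ]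
      EuclideanSpace ℂ (Fin n × Fin n) :=
  LinearMap.toContinuousLinearMap
    { toFun := fun T => WithLp.toLp 2 (fun p : Fin n × Fin n => T (EuclideanSpace.single p.2 1) p.1)
      map_add' := fun T S => by ext p; simp
      map_smul' := fun c T => by ext p; simp }

/-! Test the operators against the functionals `T ↦ n⁻¹ ⟪u_δ, T u_ε⟫`, where `u_δ, u_ε` run
over the `2ⁿ` sign vectors in `ℓ₂ⁿ`: as `‖u_δ‖ = ‖u_ε‖ = √n` they have norm at most one.
Khintchine's inequality `‖x‖ ≤ √3 · E_δ |⟪u_δ, x⟫|` in `ℓ₂ⁿ`, applied once to the vector `x = T u_ε`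
and once (Hilbert-space valued) to `E_ε ‖T u_ε‖`, gives `‖T‖_HS ≤ 3 · E_{δ,ε} |⟪u_δ, T u_ε⟫|`;
summing over the operators yields `π₁(Iₙ) ≤ 3n`. Khintchine's inequality itself follows by
Hölder, `(E X²)³ ≤ (E X)² E X⁴`, from the exact second moment and the fourth moment bound
`E ‖Σ εᵢ xᵢ‖⁴ ≤ 3 (Σ ‖xᵢ‖²)²`, both proved by induction on the number of signs.
Signs are indexed by `Bool`, and expectations appear unnormalised as sums over `Fin n → Bool`. -/

open Finset

lemma sum_sq_pow_three_le {ι : Type*} (s : Finset ι) {a : ι → ℝ} (ha : ∀ i ∈ s, 0 ≤ a i) :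
    (∑ i ∈ s, a i ^ 2) ^ 3 ≤ (∑ i ∈ s, a i) ^ 2 * ∑ i ∈ s, a i ^ 4 := by
  have h13 : (∑ i ∈ s, a i ^ 2) ^ 2 ≤ (∑ i ∈ s, a i) * ∑ i ∈ s, a i ^ 3 :=
    sum_sq_le_sum_mul_sum_of_sq_le_mul s ha (fun i hi => pow_nonneg (ha i hi) 3)
      fun i _ => le_of_eq (by ring)
  have h24 : (∑ i ∈ s, a i ^ 3) ^ 2 ≤ (∑ i ∈ s, a i ^ 2) * ∑ i ∈ s, a i ^ 4 :=
    sum_sq_le_sum_mul_sum_of_sq_le_mul s (fun i _ => sq_nonneg _)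
      (fun i hi => pow_nonneg (ha i hi) 4) fun i _ => le_of_eq (by ring)
  rcases (sum_nonneg fun i _ => sq_nonneg (a i) : 0 ≤ ∑ i ∈ s, a i ^ 2).eq_or_lt with h0 | hpos
  · rw [← h0, zero_pow three_ne_zero]
    exact mul_nonneg (sq_nonneg _) (sum_nonneg fun i hi => pow_nonneg (ha i hi) 4)
  refine le_of_mul_le_mul_right ?_ hpos
  calc (∑ i ∈ s, a i ^ 2) ^ 3 * ∑ i ∈ s, a i ^ 2 = ((∑ i ∈ s, a i ^ 2) ^ 2) ^ 2 := by ring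
    _ ≤ ((∑ i ∈ s, a i) * ∑ i ∈ s, a i ^ 3) ^ 2 := by gcongr
    _ = (∑ i ∈ s, a i) ^ 2 * (∑ i ∈ s, a i ^ 3) ^ 2 := by ring
    _ ≤ (∑ i ∈ s, a i) ^ 2 * ((∑ i ∈ s, a i ^ 2) * ∑ i ∈ s, a i ^ 4) := by gcongr
    _ = (∑ i ∈ s, a i) ^ 2 * (∑ i ∈ s, a i ^ 4) * ∑ i ∈ s, a i ^ 2 := by ring

namespace Khintchine

open RCLike

variable (𝕜 : Type*) [RCLike 𝕜]

def signOf (b : Bool) : 𝕜 := if b then 1 else -1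

variable {𝕜}

@[simp] lemma signOf_true : signOf 𝕜 true = 1 := rfl

@[simp] lemma signOf_false : signOf 𝕜 false = -1 := rfl

@[simp] lemma norm_signOf (b : Bool) : ‖signOf 𝕜 b‖ = 1 := by cases b <;> simp

@[simp] lemma conj_signOf (b : Bool) : (starRingEnd 𝕜) (signOf 𝕜 b) = signOf 𝕜 b := by
  cases b <;> simp

lemma sum_boolVec_succ {M : Type*} [AddCommMonoid M] {n : ℕ} (f : (Fin (n + 1) → Bool) → M) :
    ∑ ε, f ε = ∑ ε : Fin n → Bool, (f (Fin.cons true ε) + f (Fin.cons false ε)) := by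
  rw [← (Fin.consEquiv fun _ => Bool).sum_comp, Fintype.sum_prod_type, Fintype.sum_bool,
    ← sum_add_distrib]
  rfl

lemma card_boolVec (n : ℕ) : (univ : Finset (Fin n → Bool)).card = 2 ^ n := by simp

section Module

variable {E F : Type*} [AddCommGroup E] [Module 𝕜 E] [AddCommGroup F] [Module 𝕜 F]

variable (𝕜) in
def rademacherSum {n : ℕ} (x : Fin n → E) (ε : Fin n → Bool) : E := ∑ q, signOf 𝕜 (ε q) • x q

lemma rademacherSum_cons_true {n : ℕ} (x : Fin (n + 1) → E) (ε : Fin n → Bool) :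
    rademacherSum 𝕜 x (Fin.cons true ε) = x 0 + rademacherSum 𝕜 (Fin.tail x) ε := by
  simp [rademacherSum, Fin.sum_univ_succ, Fin.tail]

lemma rademacherSum_cons_false {n : ℕ} (x : Fin (n + 1) → E) (ε : Fin n → Bool) :
    rademacherSum 𝕜 x (Fin.cons false ε) = -(x 0 - rademacherSum 𝕜 (Fin.tail x) ε) := by
  simp [rademacherSum, Fin.sum_univ_succ, Fin.tail, neg_add_eq_sub]

lemma map_rademacherSum {G : Type*} [FunLike G E F] [LinearMapClass G 𝕜 E F] {n : ℕ} (f : G)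
    (x : Fin n → E) (ε : Fin n → Bool) :
    f (rademacherSum 𝕜 x ε) = rademacherSum 𝕜 (f ∘ x) ε := by
  simp [rademacherSum]

end Module

variable (𝕜) in
lemma norm_add_pow_four_add_norm_sub_pow_four_le {E : Type*} [NormedAddCommGroup E]
    [InnerProductSpace 𝕜 E] (a y : E) :
    ‖a + y‖ ^ 4 + ‖a - y‖ ^ 4 ≤ 2 * ‖a‖ ^ 4 + 12 * ‖a‖ ^ 2 * ‖y‖ ^ 2 + 2 * ‖y‖ ^ 4 := by
  have cauchySchwarz : |re (inner 𝕜 a y)| ≤ ‖a‖ * ‖y‖ :=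
    (abs_re_le_norm _).trans (norm_inner_le_norm a y)
  have hsq : re (inner 𝕜 a y) ^ 2 ≤ ‖a‖ ^ 2 * ‖y‖ ^ 2 := by
    rw [← mul_pow, ← sq_abs]
    exact pow_le_pow_left₀ (abs_nonneg _) cauchySchwarz 2
  have h4 : ∀ z : E, ‖z‖ ^ 4 = (‖z‖ ^ 2) ^ 2 := fun z => by ring
  rw [h4, h4 (a - y), norm_add_sq (𝕜 := 𝕜), norm_sub_sq (𝕜 := 𝕜)]
  nlinarith

variable {E : Type*} [NormedAddCommGroup E] [InnerProductSpace 𝕜 E]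

lemma sum_norm_rademacherSum_sq : ∀ {n : ℕ} (x : Fin n → E),
    ∑ ε, ‖rademacherSum 𝕜 x ε‖ ^ 2 = 2 ^ n * ∑ q, ‖x q‖ ^ 2
  | 0, x => by simp [rademacherSum]
  | n + 1, x => by
    have parallelogram : ∀ ε : Fin n → Bool,
        ‖rademacherSum 𝕜 x (Fin.cons true ε)‖ ^ 2 + ‖rademacherSum 𝕜 x (Fin.cons false ε)‖ ^ 2
          = 2 * ‖x 0‖ ^ 2 + 2 * ‖rademacherSum 𝕜 (Fin.tail x) ε‖ ^ 2 := fun ε => by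
      rw [rademacherSum_cons_true, rademacherSum_cons_false, norm_neg, norm_add_sq (𝕜 := 𝕜),
        norm_sub_sq (𝕜 := 𝕜)]
      ring
    rw [sum_boolVec_succ, sum_congr rfl fun ε _ => parallelogram ε, sum_add_distrib,
      sum_const, card_boolVec, nsmul_eq_mul, ← mul_sum, sum_norm_rademacherSum_sq,
      Fin.sum_univ_succ]
    simp only [Fin.tail, Nat.cast_pow, Nat.cast_ofNat]
    ring

lemma sum_norm_rademacherSum_pow_four_le : ∀ {n : ℕ} (x : Fin n → E),
    ∑ ε, ‖rademacherSum 𝕜 x ε‖ ^ 4 ≤ 3 * 2 ^ n * (∑ q, ‖x q‖ ^ 2) ^ 2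
  | 0, x => by simp [rademacherSum]
  | n + 1, x => by
    set A := ‖x 0‖ ^ 2
    set H := ∑ q, ‖Fin.tail x q‖ ^ 2
    set y := rademacherSum 𝕜 (Fin.tail x)
    have step : ∀ ε : Fin n → Bool,
        ‖rademacherSum 𝕜 x (Fin.cons true ε)‖ ^ 4 + ‖rademacherSum 𝕜 x (Fin.cons false ε)‖ ^ 4
          ≤ 2 * A ^ 2 + 12 * A * ‖y ε‖ ^ 2 + 2 * ‖y ε‖ ^ 4 := fun ε => by
      rw [rademacherSum_cons_true, rademacherSum_cons_false, norm_neg]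
      have := norm_add_pow_four_add_norm_sub_pow_four_le 𝕜 (x 0) (y ε)
      linarith
    have hA : 0 ≤ A := by positivity
    have hH : 0 ≤ H := by positivity
    calc ∑ ε, ‖rademacherSum 𝕜 x ε‖ ^ 4
        ≤ ∑ ε : Fin n → Bool, (2 * A ^ 2 + 12 * A * ‖y ε‖ ^ 2 + 2 * ‖y ε‖ ^ 4) := by
          rw [sum_boolVec_succ]; exact sum_le_sum fun ε _ => step ε
      _ ≤ 2 ^ n * (2 * A ^ 2) + 12 * A * (2 ^ n * H) + 2 * (3 * 2 ^ n * H ^ 2) := by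
          rw [sum_add_distrib, sum_add_distrib, sum_const, card_boolVec, nsmul_eq_mul,
            ← mul_sum, ← mul_sum, sum_norm_rademacherSum_sq]
          push_cast
          gcongr
          exact sum_norm_rademacherSum_pow_four_le _
      _ ≤ 3 * 2 ^ (n + 1) * (∑ q, ‖x q‖ ^ 2) ^ 2 := by
          have hsplit : ∑ q, ‖x q‖ ^ 2 = A + H := Fin.sum_univ_succ _
          rw [hsplit, pow_succ (2 : ℝ)]
          have : (0 : ℝ) ≤ 2 ^ n := by positivity
          nlinarith [mul_nonneg this (mul_nonneg hA hA), mul_nonneg this (mul_nonneg hA hH)]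

theorem two_pow_mul_sqrt_sum_norm_sq_le {n : ℕ} (x : Fin n → E) :
    2 ^ n * √(∑ q, ‖x q‖ ^ 2) ≤ √3 * ∑ ε, ‖rademacherSum 𝕜 x ε‖ := by
  set H := ∑ q, ‖x q‖ ^ 2
  set S := ∑ ε, ‖rademacherSum 𝕜 x ε‖
  have hH : 0 ≤ H := by positivity
  have holder : (2 ^ n * H) ^ 3 ≤ S ^ 2 * (3 * 2 ^ n * H ^ 2) := by
    have := sum_sq_pow_three_le univ fun ε _ => norm_nonneg (rademacherSum 𝕜 x ε)
    rw [sum_norm_rademacherSum_sq] at this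
    exact this.trans (by gcongr; exact sum_norm_rademacherSum_pow_four_le x)
  have hsq : (2 ^ n * √H) ^ 2 ≤ (√3 * S) ^ 2 := by
    rw [mul_pow, mul_pow, Real.sq_sqrt hH, Real.sq_sqrt (by norm_num)]
    rcases hH.eq_or_lt with h0 | hpos
    · rw [← h0, mul_zero]; positivity
    refine le_of_mul_le_mul_right (a := 2 ^ n * H ^ 2) ?_ (by positivity)
    linear_combination holder
  exact (pow_le_pow_iff_left₀ (by positivity) (by positivity) two_ne_zero).1 hsq

end Khintchine

open Khintchine

section SignVectors

variable {𝕜 : Type*} [RCLike 𝕜] {n : ℕ}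

variable (𝕜) in
def signVec (ε : Fin n → Bool) : EuclideanSpace 𝕜 (Fin n) :=
  WithLp.toLp 2 fun q => signOf 𝕜 (ε q)

lemma norm_signVec (ε : Fin n → Bool) : ‖signVec 𝕜 ε‖ = √n := by
  simp [EuclideanSpace.norm_eq, signVec]

lemma signVec_eq_rademacherSum (ε : Fin n → Bool) :
    signVec 𝕜 ε = rademacherSum 𝕜 (fun q => EuclideanSpace.single q 1) ε := by
  ext p
  simp [signVec, rademacherSum, Pi.single_apply]

lemma inner_signVec (ε : Fin n → Bool) (y : EuclideanSpace 𝕜 (Fin n)) :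
    inner 𝕜 (signVec 𝕜 ε) y = rademacherSum 𝕜 (fun p => y p) ε := by
  simp [signVec, rademacherSum, PiLp.inner_apply, mul_comm]

theorem two_pow_mul_norm_le_sum_norm_inner_signVec (y : EuclideanSpace 𝕜 (Fin n)) :
    2 ^ n * ‖y‖ ≤ √3 * ∑ δ, ‖inner 𝕜 (signVec 𝕜 δ) y‖ := by
  simpa [EuclideanSpace.norm_eq, inner_signVec] using two_pow_mul_sqrt_sum_norm_sq_le (𝕜 := 𝕜) fun p => y p

end SignVectors

section OpToHS

variable {n : ℕ}

lemma norm_opToHS (T : EuclideanSpace ℂ (Fin n) →L[ℂ] EuclideanSpace ℂ (Fin n)) :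
    ‖opToHS n T‖ = √(∑ q, ‖T (EuclideanSpace.single q 1)‖ ^ 2) := by
  rw [EuclideanSpace.norm_eq, Fintype.sum_prod_type_right]
  congr 1
  refine sum_congr rfl fun q _ => ?_
  rw [EuclideanSpace.norm_sq_eq]
  rfl

theorem two_pow_mul_two_pow_mul_norm_opToHS_le
    (T : EuclideanSpace ℂ (Fin n) →L[ℂ] EuclideanSpace ℂ (Fin n)) :
    2 ^ n * 2 ^ n * ‖opToHS n T‖
      ≤ 3 * ∑ ε, ∑ δ, ‖inner ℂ (signVec ℂ δ) (T (signVec ℂ ε))‖ := by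
  have hT : ∀ ε, T (signVec ℂ ε) = rademacherSum ℂ (fun q => T (EuclideanSpace.single q 1)) ε :=
    fun ε => by rw [signVec_eq_rademacherSum, map_rademacherSum T]; rfl
  calc 2 ^ n * 2 ^ n * ‖opToHS n T‖
      = 2 ^ n * (2 ^ n * √(∑ q, ‖T (EuclideanSpace.single q 1)‖ ^ 2)) := by
        rw [norm_opToHS, mul_assoc]
    _ ≤ 2 ^ n * (√3 * ∑ ε, ‖T (signVec ℂ ε)‖) := by
        simp only [hT]
        exact mul_le_mul_of_nonneg_left (two_pow_mul_sqrt_sum_norm_sq_le _) (by positivity)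
    _ = √3 * ∑ ε, 2 ^ n * ‖T (signVec ℂ ε)‖ := by rw [mul_left_comm, mul_sum]
    _ ≤ √3 * ∑ ε, √3 * ∑ δ, ‖inner ℂ (signVec ℂ δ) (T (signVec ℂ ε))‖ := by
        exact mul_le_mul_of_nonneg_left
          (sum_le_sum fun ε _ => two_pow_mul_norm_le_sum_norm_inner_signVec _) (by positivity)
    _ = 3 * ∑ ε, ∑ δ, ‖inner ℂ (signVec ℂ δ) (T (signVec ℂ ε))‖ := by
        rw [← mul_sum, ← mul_assoc, Real.mul_self_sqrt (by norm_num)]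

end OpToHS

lemma norm_innerSL_comp_apply_le {𝕜 E : Type*} [RCLike 𝕜] [NormedAddCommGroup E]
    [InnerProductSpace 𝕜 E] (u v : E) :
    ‖(innerSL 𝕜 u).comp (ContinuousLinearMap.apply 𝕜 E v)‖ ≤ ‖u‖ * ‖v‖ :=
  ContinuousLinearMap.opNorm_le_bound _ (by positivity) fun T =>
    calc ‖inner 𝕜 u (T v)‖ ≤ ‖u‖ * ‖T v‖ := norm_inner_le_norm _ _
      _ ≤ ‖u‖ * (‖T‖ * ‖v‖) := by gcongr; exact T.le_opNorm v
      _ = ‖u‖ * ‖v‖ * ‖T‖ := by ring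

lemma sum_norm_apply_le_opNorm_mul {𝕜 E ι : Type*} [RCLike 𝕜] [NormedAddCommGroup E]
    [NormedSpace 𝕜 E] [Fintype ι] {v : ι → E} {B : ℝ}
    (hB : ∀ φ : E →L[𝕜] 𝕜, ‖φ‖ ≤ 1 → ∑ i, ‖φ (v i)‖ ≤ B) (ψ : E →L[𝕜] 𝕜) :
    ∑ i, ‖ψ (v i)‖ ≤ ‖ψ‖ * B := by
  rcases (norm_nonneg ψ).eq_or_lt with h0 | hpos
  · simp [norm_eq_zero.1 h0.symm]
  have hunit : ‖‖ψ‖⁻¹ • ψ‖ ≤ 1 := by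
    rw [norm_smul, norm_inv, norm_norm, inv_mul_cancel₀ hpos.ne']
  have := hB _ hunit
  simp only [FunLike.coe_smul, Pi.smul_apply, norm_smul, norm_inv, norm_norm, ← mul_sum] at this
  rwa [inv_mul_le_iff₀ hpos] at this

/-- **Proposition 2 (1).**  There is a universal constant `c > 0` with
`π₁(Iₙ) ≤ c·n` for every `n ≥ 1`. -/
theorem pi_one_norm_opToHS_le :
    ∃ c > (0 : ℝ), ∀ n : ℕ, 1 ≤ n → PSummingWith 1 (opToHS n) (c * n) := by
  refine ⟨3, by norm_num, fun n _ k v B hB => ?_⟩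
  simp only [div_one, Real.rpow_one] at hB ⊢
  have hB0 : 0 ≤ B := by simpa using hB 0 (by simp)
  have htest : ∀ δ ε, ∑ i, ‖inner ℂ (signVec ℂ δ) (v i (signVec ℂ ε))‖ ≤ n * B := fun δ ε =>
    calc _ ≤ ‖(innerSL ℂ (signVec ℂ δ)).comp (ContinuousLinearMap.apply ℂ _ (signVec ℂ ε))‖ * B :=
          sum_norm_apply_le_opNorm_mul hB _
      _ ≤ n * B := by
          gcongr
          refine (norm_innerSL_comp_apply_le _ _).trans_eq ?_
          rw [norm_signVec, norm_signVec, Real.mul_self_sqrt n.cast_nonneg]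
  have h2n : (0 : ℝ) < 2 ^ n * 2 ^ n := by positivity
  refine le_of_mul_le_mul_left ?_ h2n
  calc 2 ^ n * 2 ^ n * ∑ i, ‖opToHS n (v i)‖
      ≤ ∑ i, 3 * ∑ ε, ∑ δ, ‖inner ℂ (signVec ℂ δ) (v i (signVec ℂ ε))‖ := by
        rw [mul_sum]; exact sum_le_sum fun i _ => two_pow_mul_two_pow_mul_norm_opToHS_le (v i)
    _ = 3 * ∑ ε, ∑ δ, ∑ i, ‖inner ℂ (signVec ℂ δ) (v i (signVec ℂ ε))‖ := by
        rw [← mul_sum, sum_comm]; simp only [sum_comm (s := univ (α := Fin k))]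
    _ ≤ 3 * ∑ ε : Fin n → Bool, ∑ δ : Fin n → Bool, (n * B) := by gcongr with ε _ δ; exact htest δ ε
    _ = 2 ^ n * 2 ^ n * (3 * n * B) := by simp; ring
end
end

section
/- Let H and H′ be Hilbert spaces and K : H → H′ an absolutely 2-summing operator. Then K is L₁-factorable with γ₁(K) ≤ π₂(K). -/
/-!
Fix a Hilbert basis `(eᵢ)` of `H`. An orthonormal family is weakly `2`-summable with constant `1`
(Bessel's inequality applied to the Riesz representative of a functional), so the `2`-summing
inequality gives `σ := (∑ ‖K eᵢ‖²)^{1/2} ≤ π₂(K)`. Then `K` factors through `ℓ¹(I)`: the map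
`x ↦ (‖K eᵢ‖ ⟪eᵢ, x⟫)ᵢ` has norm `≤ σ` by Cauchy–Schwarz and Bessel, the map
`(fᵢ) ↦ ∑ fᵢ K eᵢ / ‖K eᵢ‖` has norm `≤ 1`, and their composite is `∑ ⟪eᵢ, x⟫ K eᵢ = K x`.
-/

open NormedSpace MeasureTheory Metric

noncomputable section

universe u v

/-- The `p`-summing norm `π_p(T)`. -/
def piNorm {E F : Type*} [NormedAddCommGroup E] [NormedSpace ℂ E]
    [NormedAddCommGroup F] [NormedSpace ℂ F] (p : ℝ) (T : E →L[ℂ] F) : ℝ :=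
  sInf {C | 0 ≤ C ∧ PSummingWith p T C}

open scoped InnerProductSpace

theorem Real.summable_mul_and_tsum_mul_le_sqrt {ι : Type*} {f g : ι → ℝ}
    (hf : ∀ i, 0 ≤ f i) (hg : ∀ i, 0 ≤ g i)
    (hf2 : Summable fun i => f i ^ 2) (hg2 : Summable fun i => g i ^ 2) :
    Summable (fun i => f i * g i) ∧
      ∑' i, f i * g i ≤ √(∑' i, f i ^ 2) * √(∑' i, g i ^ 2) := by
  simpa only [Real.rpow_two, ← Real.sqrt_eq_rpow] using
    Real.summable_and_inner_le_Lp_mul_Lq_tsum_of_nonneg .two_two hf hg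
      (by simpa only [Real.rpow_two] using hf2) (by simpa only [Real.rpow_two] using hg2)

theorem norm_smul_inv_norm_smul {𝕜 F : Type*} [RCLike 𝕜] [NormedAddCommGroup F]
    [NormedSpace 𝕜 F] (v : F) : (‖v‖ : 𝕜) • ((‖v‖ : 𝕜)⁻¹ • v) = v := by
  rcases eq_or_ne v 0 with rfl | hv
  · simp
  · exact smul_inv_smul₀ (by simpa using hv) v

theorem norm_inv_norm_smul_le_one {𝕜 F : Type*} [RCLike 𝕜] [NormedAddCommGroup F]
    [NormedSpace 𝕜 F] (v : F) : ‖(‖v‖ : 𝕜)⁻¹ • v‖ ≤ 1 := by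
  rcases eq_or_ne v 0 with rfl | hv
  · simp
  · exact (norm_smul_inv_norm hv).le

theorem Orthonormal.sum_norm_apply_sq_le {𝕜 E ι : Type*} [RCLike 𝕜] [NormedAddCommGroup E]
    [InnerProductSpace 𝕜 E] [CompleteSpace E] {v : ι → E} (hv : Orthonormal 𝕜 v)
    (φ : StrongDual 𝕜 E) (s : Finset ι) : ∑ i ∈ s, ‖φ (v i)‖ ^ 2 ≤ ‖φ‖ ^ 2 := by
  set y := (InnerProductSpace.toDual 𝕜 E).symm φ
  have hφ : ∀ i, ‖φ (v i)‖ = ‖⟪v i, y⟫_𝕜‖ := fun i => by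
    rw [← InnerProductSpace.toDual_symm_apply, norm_inner_symm]
  calc ∑ i ∈ s, ‖φ (v i)‖ ^ 2 = ∑ i ∈ s, ‖⟪v i, y⟫_𝕜‖ ^ 2 := by simp only [hφ]
    _ ≤ ‖y‖ ^ 2 := hv.sum_inner_products_le y
    _ = ‖φ‖ ^ 2 := by rw [LinearIsometryEquiv.norm_map]

section PSumming

variable {H F : Type*} [NormedAddCommGroup H] [InnerProductSpace ℂ H] [CompleteSpace H]
  [NormedAddCommGroup F] [NormedSpace ℂ F] {T : H →L[ℂ] F} {C : ℝ}

theorem PSummingWith.sum_norm_sq_le_of_orthonormal_fin (hT : PSummingWith 2 T C) {n : ℕ}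
    {v : Fin n → H} (hv : Orthonormal ℂ v) : ∑ i, ‖T (v i)‖ ^ 2 ≤ C ^ 2 := by
  have hweak : ∀ φ : H →L[ℂ] ℂ, ‖φ‖ ≤ 1 → (∑ i, ‖φ (v i)‖ ^ (2 : ℝ)) ^ (1 / 2 : ℝ) ≤ 1 := by
    intro φ hφ
    simp only [Real.rpow_two, ← Real.sqrt_eq_rpow, Real.sqrt_le_one]
    exact (hv.sum_norm_apply_sq_le φ _).trans (pow_le_one₀ (norm_nonneg φ) hφ)
  have h := hT n v 1 hweak
  simp only [Real.rpow_two, ← Real.sqrt_eq_rpow, mul_one] at h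
  exact (Real.sqrt_le_left ((Real.sqrt_nonneg _).trans h)).mp h

theorem PSummingWith.sum_norm_sq_le_of_orthonormal (hT : PSummingWith 2 T C) {ι : Type*}
    {v : ι → H} (hv : Orthonormal ℂ v) (s : Finset ι) : ∑ i ∈ s, ‖T (v i)‖ ^ 2 ≤ C ^ 2 := by
  let e := s.equivFin.symm
  have hve : Orthonormal ℂ (fun j => v (e j)) :=
    hv.comp _ (Subtype.val_injective.comp e.injective)
  calc ∑ i ∈ s, ‖T (v i)‖ ^ 2 = ∑ j, ‖T (v (e j))‖ ^ 2 := by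
        rw [← Finset.sum_coe_sort s, ← e.sum_comp]
    _ ≤ C ^ 2 := hT.sum_norm_sq_le_of_orthonormal_fin hve

theorem sqrt_tsum_norm_sq_le_piNorm (hT : ∃ C, 0 ≤ C ∧ PSummingWith 2 T C) {ι : Type*}
    {v : ι → H} (hv : Orthonormal ℂ v) : √(∑' i, ‖T (v i)‖ ^ 2) ≤ piNorm 2 T :=
  le_csInf hT fun _ ⟨hC0, hC⟩ => (Real.sqrt_le_left hC0).mpr <|
    Real.tsum_le_of_sum_le (fun _ => sq_nonneg _) (hC.sum_norm_sq_le_of_orthonormal hv)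

end PSumming

namespace MeasureTheory

section CountL1

variable {ι E : Type*} [MeasurableSpace ι] [NormedAddCommGroup E] {p : ENNReal}

theorem Lp.ext_count {f g : Lp E p (Measure.count : Measure ι)} (h : ∀ i, f i = g i) :
    f = g :=
  Lp.ext (Measure.ae_count_iff.mpr h)

theorem MemLp.coeFn_toLp_count {f : ι → E} (hf : MemLp f p Measure.count) :
    ⇑(hf.toLp f) = f :=
  funext (Measure.ae_count_iff.mp hf.coeFn_toLp)

theorem Lp.coeFn_add_count (f g : Lp E p (Measure.count : Measure ι)) : ⇑(f + g) = f + g :=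
  funext (Measure.ae_count_iff.mp (Lp.coeFn_add f g))

theorem Lp.coeFn_smul_count {𝕜 : Type*} [NormedRing 𝕜] [Module 𝕜 E] [IsBoundedSMul 𝕜 E] (c : 𝕜)
    (f : Lp E p (Measure.count : Measure ι)) : ⇑(c • f) = c • ⇑f :=
  funext (Measure.ae_count_iff.mp (Lp.coeFn_smul c f))

variable [MeasurableSingletonClass ι]

theorem memLp_one_count_iff {f : ι → E} :
    MemLp f 1 (Measure.count : Measure ι) ↔ Summable (‖f ·‖) :=
  memLp_one_iff_integrable.trans integrable_count_iff

theorem Lp.summable_norm_count (f : Lp E 1 (Measure.count : Measure ι)) :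
    Summable (‖f ·‖) :=
  memLp_one_count_iff.mp (Lp.memLp f)

theorem Lp.norm_eq_tsum_norm_count (f : Lp E 1 (Measure.count : Measure ι)) :
    ‖f‖ = ∑' i, ‖f i‖ := by
  rw [Lp.norm_def, eLpNorm_one_eq_lintegral_enorm, lintegral_count,
    ENNReal.tsum_toReal_eq fun _ => enorm_ne_top]
  simp only [toReal_enorm]

end CountL1

section Synthesis

variable {ι 𝕜 F : Type*} [MeasurableSpace ι] [MeasurableSingletonClass ι]
  [NontriviallyNormedField 𝕜] [NormedAddCommGroup F] [NormedSpace 𝕜 F] {g : ι → F} {C : ℝ}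

theorem Lp.norm_tsum_smul_le_count (hg : ∀ i, ‖g i‖ ≤ C)
    (f : Lp 𝕜 1 (Measure.count : Measure ι)) : ‖∑' i, f i • g i‖ ≤ C * ‖f‖ := by
  rw [mul_comm, Lp.norm_eq_tsum_norm_count, ← tsum_mul_right]
  exact tsum_of_norm_bounded ((Lp.summable_norm_count f).mul_right C).hasSum fun i =>
    (norm_smul_le _ _).trans (mul_le_mul_of_nonneg_left (hg i) (norm_nonneg _))

variable [CompleteSpace F]

theorem Lp.summable_smul_count (hg : ∀ i, ‖g i‖ ≤ C) (f : Lp 𝕜 1 (Measure.count : Measure ι)) :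
    Summable fun i => f i • g i :=
  .of_norm_bounded ((Lp.summable_norm_count f).mul_right C) fun i =>
    (norm_smul_le _ _).trans (mul_le_mul_of_nonneg_left (hg i) (norm_nonneg _))

def Lp.tsumSMulCLM (g : ι → F) (hg : ∀ i, ‖g i‖ ≤ C) :
    Lp 𝕜 1 (Measure.count : Measure ι) →L[𝕜] F :=
  LinearMap.mkContinuous
    { toFun := fun f => ∑' i, f i • g i
      map_add' := fun f f' => by
        simp only [Lp.coeFn_add_count, Pi.add_apply, add_smul]
        exact (Lp.summable_smul_count hg f).tsum_add (Lp.summable_smul_count hg f')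
      map_smul' := fun c f => by
        simp only [Lp.coeFn_smul_count, Pi.smul_apply, smul_eq_mul, mul_smul, RingHom.id_apply]
        exact tsum_const_smul'' c }
    C (Lp.norm_tsum_smul_le_count hg)

theorem Lp.tsumSMulCLM_apply (hg : ∀ i, ‖g i‖ ≤ C) (f : Lp 𝕜 1 (Measure.count : Measure ι)) :
    Lp.tsumSMulCLM g hg f = ∑' i, f i • g i :=
  rfl

theorem Lp.norm_tsumSMulCLM_le (hg : ∀ i, ‖g i‖ ≤ C) (hC : 0 ≤ C) :
    ‖(Lp.tsumSMulCLM g hg : Lp 𝕜 1 (Measure.count : Measure ι) →L[𝕜] F)‖ ≤ C :=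
  LinearMap.mkContinuous_norm_le _ hC _

end Synthesis

end MeasureTheory

section WeightedCoeffs

variable {ι 𝕜 E : Type*} [RCLike 𝕜] [NormedAddCommGroup E] [InnerProductSpace 𝕜 E]
  {e : ι → E} {c : ι → 𝕜}

theorem Orthonormal.summable_and_tsum_norm_mul_inner_le (he : Orthonormal 𝕜 e)
    (hc : Summable fun i => ‖c i‖ ^ 2) (x : E) :
    Summable (fun i => ‖c i * ⟪e i, x⟫_𝕜‖) ∧
      ∑' i, ‖c i * ⟪e i, x⟫_𝕜‖ ≤ √(∑' i, ‖c i‖ ^ 2) * ‖x‖ := by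
  simp only [norm_mul]
  obtain ⟨hsum, hle⟩ := Real.summable_mul_and_tsum_mul_le_sqrt (fun i => norm_nonneg (c i))
    (fun i => norm_nonneg _) hc (he.inner_products_summable x)
  refine ⟨hsum, hle.trans ?_⟩
  gcongr
  exact Real.sqrt_le_left (norm_nonneg x) |>.mpr (he.tsum_inner_products_le x)

variable [MeasurableSpace ι] [MeasurableSingletonClass ι]

theorem Orthonormal.memLp_one_mul_inner (he : Orthonormal 𝕜 e)
    (hc : Summable fun i => ‖c i‖ ^ 2) (x : E) :
    MemLp (fun i => c i * ⟪e i, x⟫_𝕜) 1 (Measure.count : Measure ι) :=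
  memLp_one_count_iff.mpr (he.summable_and_tsum_norm_mul_inner_le hc x).1

def Orthonormal.weightedCoeffsCLM (he : Orthonormal 𝕜 e) (hc : Summable fun i => ‖c i‖ ^ 2) :
    E →L[𝕜] Lp 𝕜 1 (Measure.count : Measure ι) :=
  LinearMap.mkContinuous
    { toFun := fun x => (he.memLp_one_mul_inner hc x).toLp _
      map_add' := fun x y => Lp.ext_count fun i => by
        simp only [MemLp.coeFn_toLp_count, Lp.coeFn_add_count, Pi.add_apply, inner_add_right,
          mul_add]
      map_smul' := fun a x => Lp.ext_count fun i => by
        simp only [MemLp.coeFn_toLp_count, Lp.coeFn_smul_count, Pi.smul_apply, inner_smul_right,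
          smul_eq_mul, RingHom.id_apply, mul_left_comm] }
    √(∑' i, ‖c i‖ ^ 2) fun x => by
      rw [Lp.norm_eq_tsum_norm_count]
      simp only [LinearMap.coe_mk, AddHom.coe_mk, MemLp.coeFn_toLp_count]
      exact (he.summable_and_tsum_norm_mul_inner_le hc x).2

theorem Orthonormal.weightedCoeffsCLM_apply (he : Orthonormal 𝕜 e)
    (hc : Summable fun i => ‖c i‖ ^ 2) (x : E) (i : ι) :
    he.weightedCoeffsCLM hc x i = c i * ⟪e i, x⟫_𝕜 :=
  congrFun (MemLp.coeFn_toLp_count (he.memLp_one_mul_inner hc x)) i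

theorem Orthonormal.norm_weightedCoeffsCLM_le (he : Orthonormal 𝕜 e)
    (hc : Summable fun i => ‖c i‖ ^ 2) :
    ‖(he.weightedCoeffsCLM hc : E →L[𝕜] Lp 𝕜 1 (Measure.count : Measure ι))‖ ≤
      √(∑' i, ‖c i‖ ^ 2) :=
  LinearMap.mkContinuous_norm_le _ (Real.sqrt_nonneg _) _

end WeightedCoeffs

theorem HilbertBasis.exists_factorization_through_l1 {ι 𝕜 E F : Type*} [MeasurableSpace ι]
    [MeasurableSingletonClass ι] [RCLike 𝕜] [NormedAddCommGroup E] [InnerProductSpace 𝕜 E]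
    [NormedAddCommGroup F] [NormedSpace 𝕜 F] [CompleteSpace F] (b : HilbertBasis ι 𝕜 E)
    (T : E →L[𝕜] F) (hT : Summable fun i => ‖T (b i)‖ ^ 2) :
    ∃ (U₁ : E →L[𝕜] Lp 𝕜 1 (Measure.count : Measure ι))
      (U₂ : Lp 𝕜 1 (Measure.count : Measure ι) →L[𝕜] F),
      (∀ x, U₂ (U₁ x) = T x) ∧ ‖U₁‖ ≤ √(∑' i, ‖T (b i)‖ ^ 2) ∧ ‖U₂‖ ≤ 1 := by
  let c : ι → 𝕜 := fun i => ‖T (b i)‖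
  have hc : Summable fun i => ‖c i‖ ^ 2 := by simpa [c] using hT
  have hg : ∀ i, ‖(c i)⁻¹ • T (b i)‖ ≤ 1 := fun i => norm_inv_norm_smul_le_one _
  refine ⟨b.orthonormal.weightedCoeffsCLM hc, Lp.tsumSMulCLM _ hg, fun x => ?_,
    by simpa [c] using b.orthonormal.norm_weightedCoeffsCLM_le hc,
    Lp.norm_tsumSMulCLM_le hg zero_le_one⟩
  have hterm : ∀ i, (c i * ⟪b i, x⟫_𝕜) • ((c i)⁻¹ • T (b i)) = ⟪b i, x⟫_𝕜 • T (b i) := fun i => by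
    rw [mul_comm, mul_smul, norm_smul_inv_norm_smul]
  simp only [Lp.tsumSMulCLM_apply, Orthonormal.weightedCoeffsCLM_apply, hterm]
  simpa only [b.repr_apply_apply, map_smul] using ((b.hasSum_repr x).mapL T).tsum_eq

theorem two_summing_hilbert_space_operator_L1_factorable_general
    {H : Type u} [NormedAddCommGroup H] [InnerProductSpace ℂ H] [CompleteSpace H]
    {H' : Type v} [NormedAddCommGroup H'] [InnerProductSpace ℂ H']
    (K : H →L[ℂ] H') (hK : ∃ C, 0 ≤ C ∧ PSummingWith 2 K C) :
    ∀ ε > (0 : ℝ),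
      ∃ (Ω : Type u) (_ : MeasurableSpace Ω) (μ : Measure Ω)
        (U₁ : H →L[ℂ] Lp ℂ 1 μ)
        (U₂ : Lp ℂ 1 μ →L[ℂ] StrongDual ℂ (StrongDual ℂ H')),
        (∀ x, U₂ (U₁ x) = NormedSpace.inclusionInDoubleDual ℂ H' (K x)) ∧
        ‖U₁‖ * @Norm.norm _ (ContinuousLinearMap.hasOpNorm (𝕜 := ℂ) (𝕜₂ := ℂ) (E := Lp ℂ 1 μ)
          (F := StrongDual ℂ (StrongDual ℂ H')) (σ₁₂ := RingHom.id ℂ)) U₂ ≤ piNorm 2 K + ε := by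
  intro ε hε
  obtain ⟨w, b, -⟩ := exists_hilbertBasis ℂ H
  let _ : MeasurableSpace w := ⊤
  let T : H →L[ℂ] StrongDual ℂ (StrongDual ℂ H') := (inclusionInDoubleDual ℂ H').comp K
  have hT : ∀ i, ‖T (b i)‖ = ‖K (b i)‖ := fun i => (inclusionInDoubleDualLi ℂ).norm_map (K (b i))
  have hσ := sqrt_tsum_norm_sq_le_piNorm hK b.orthonormal
  obtain ⟨C, -, hC⟩ := hK
  -- Giving `F` fixes the bidual's instances up front; inferring them from `T` times out.
  obtain ⟨U₁, U₂, hU, hU₁, hU₂⟩ :=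
    b.exists_factorization_through_l1 (F := StrongDual ℂ (StrongDual ℂ H')) T <| by
      simpa only [hT] using summable_of_sum_le (fun _ => sq_nonneg _)
        (hC.sum_norm_sq_le_of_orthonormal b.orthonormal)
  refine ⟨w, ⊤, .count, U₁, U₂, hU, ?_⟩
  simp only [hT] at hU₁
  calc ‖U₁‖ * ‖U₂‖ ≤ √(∑' i, ‖K (b i)‖ ^ 2) * 1 := by gcongr
    _ ≤ piNorm 2 K + ε := by linarith

/-- An absolutely `2`-summing (equivalently, Hilbert–Schmidt) operator between Hilbert
spaces is `L₁`-factorable with `γ₁(K) ≤ π₂(K)`: for every `ε > 0` there is a factorization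
`i ∘ K = U₂ ∘ U₁` through an `L₁(μ)`-space of cost `‖U₁‖ ‖U₂‖ ≤ π₂(K) + ε`. -/
theorem two_summing_hilbert_space_operator_L1_factorable
    {H : Type u} [NormedAddCommGroup H] [InnerProductSpace ℂ H] [CompleteSpace H]
    {H' : Type v} [NormedAddCommGroup H'] [InnerProductSpace ℂ H'] [CompleteSpace H']
    (K : H →L[ℂ] H') (hK : ∃ C, 0 ≤ C ∧ PSummingWith 2 K C) :
    ∀ ε > (0 : ℝ),
      ∃ (Ω : Type u) (_ : MeasurableSpace Ω) (μ : Measure Ω)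
        (U₁ : H →L[ℂ] Lp ℂ 1 μ)
        (U₂ : Lp ℂ 1 μ →L[ℂ] StrongDual ℂ (StrongDual ℂ H')),
        (∀ x, U₂ (U₁ x) = NormedSpace.inclusionInDoubleDual ℂ H' (K x)) ∧
        ‖U₁‖ * @Norm.norm _ (ContinuousLinearMap.hasOpNorm (𝕜 := ℂ) (𝕜₂ := ℂ) (E := Lp ℂ 1 μ)
          (F := StrongDual ℂ (StrongDual ℂ H')) (σ₁₂ := RingHom.id ℂ)) U₂ ≤ piNorm 2 K + ε :=
  two_summing_hilbert_space_operator_L1_factorable_general K hK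
end
end
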